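/- arXiv:2205.07495 — 5 statements merged into one kernel-verified Lean document; each statement's English description precedes it below -/
import Mathlib

section
/- Let X be a real Banach space with dual X*, let N ≥ 1 and m ≥ 0 be integers, and set M := min(N, m+1). Let f_1, …, f_N ∈ X be nonzero elements, let σ_1, …, σ_m ∈ X*, let a_1, …, a_N > 0 be positive reals, and set φ := Σ_{i=1}^N a_i f_i. Then there exist nonnegative coefficients b_1, …, b_M ≥ 0 and indices e(1), …, e(M) ∈ {1, …, N} such that Σ_{j=1}^M b_j = Σ_{i=1}^N a_i and the element u := Σ_{j=1}^M b_j f_{e(j)} satisfies σ_l(φ − u) = 0 for every l ∈ {1, …, m}. -/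
/-!
Apply the moment map `T x = (σ_l x)_l : X → ℝ^m`. The point `T φ / ∑ a_i` is a convex combination
of the `T f_i`, so by Carathéodory's theorem it is already a convex combination of at most `m + 1`
affinely independent ones among them (and trivially of at most `N`). Rescaling these weights by
`∑ a_i`, and padding with zero weights up to exactly `min N (m + 1)` indices, gives the `b_j`.
-/

open Finset Function Module

theorem exists_nonneg_weights_card_support_le_finrank_succ {𝕜 E ι : Type*} [Field 𝕜]
    [LinearOrder 𝕜] [IsStrictOrderedRing 𝕜] [AddCommGroup E] [Module 𝕜 E] [FiniteDimensional 𝕜 E]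
    [Fintype ι] (w : ι → E) {a : ι → 𝕜} (ha : ∀ i, 0 ≤ a i) :
    ∃ (t : Finset ι) (b : ι → 𝕜), #t ≤ finrank 𝕜 E + 1 ∧ (∀ i, 0 ≤ b i) ∧ (∀ i ∉ t, b i = 0) ∧
      ∑ i, b i = ∑ i, a i ∧ ∑ i, b i • w i = ∑ i, a i • w i := by
  classical
  set s := ∑ i, a i
  rcases (sum_nonneg fun i _ => ha i).eq_or_lt with hs | hs
  · have ha0 : ∀ i, a i = 0 := fun i =>
      (sum_eq_zero_iff_of_nonneg fun i _ => ha i).1 hs.symm i (mem_univ i)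
    exact ⟨∅, a, by simp, ha, fun i _ => ha0 i, rfl, rfl⟩
  have hmem : univ.centerMass a w ∈ convexHull 𝕜 (Set.range w) :=
    univ.centerMass_mem_convexHull (fun i _ => ha i) hs fun i _ => Set.mem_range_self i
  obtain ⟨κ, _, z, c, hzw, hz, hc, hc1, hcz⟩ := eq_pos_convex_span_of_mem_convexHull hmem
  choose g hg using fun j => hzw (Set.mem_range_self j)
  have hg_inj : Injective g := fun j k h => hz.injective (by rw [← hg, ← hg, h])
  set b := extend g (fun j => s * c j) 0
  have hb_in : ∀ j, b (g j) = s * c j := hg_inj.extend_apply _ _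
  have hb_out : ∀ i ∉ Set.range g, b i = 0 := fun i hi => extend_apply' _ _ _ hi
  refine ⟨univ.image g, b, ?_, fun i => ?_, fun i hi => hb_out i (by simpa using hi), ?_, ?_⟩
  · calc #(univ.image g) ≤ Fintype.card κ := card_image_le
      _ ≤ finrank 𝕜 (vectorSpan 𝕜 (Set.range z)) + 1 := hz.card_le_finrank_succ
      _ ≤ finrank 𝕜 E + 1 := by grw [Submodule.finrank_le]
  · by_cases hi : i ∈ Set.range g
    · obtain ⟨j, rfl⟩ := hi
      exact hb_in j ▸ mul_nonneg hs.le (hc j).le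
    · exact (hb_out i hi).ge
  · calc ∑ i, b i = ∑ j, s * c j :=
          (Fintype.sum_of_injective g hg_inj _ _ hb_out fun j => (hb_in j).symm).symm
      _ = s := by rw [← mul_sum, hc1, mul_one]
  · calc ∑ i, b i • w i = ∑ j, (s * c j) • z j :=
          (Fintype.sum_of_injective g hg_inj _ _ (fun i hi => by rw [hb_out i hi, zero_smul])
            fun j => by rw [hb_in, hg]).symm
      _ = s • univ.centerMass a w := by simp only [mul_smul, ← smul_sum, hcz]
      _ = ∑ i, a i • w i := smul_inv_smul₀ hs.ne' _

theorem Finset.exists_injective_fin_range_superset {ι : Type*} [Fintype ι] (t : Finset ι) {n : ℕ}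
    (htn : #t ≤ n) (hn : n ≤ Fintype.card ι) : ∃ e : Fin n → ι, Injective e ∧ ↑t ⊆ Set.range e := by
  obtain ⟨u, htu, -, hu⟩ := exists_subsuperset_card_eq (subset_univ t) htn (by simpa using hn)
  subst hu
  exact ⟨fun j => u.equivFin.symm j, Subtype.val_injective.comp u.equivFin.symm.injective,
    fun i hi => ⟨u.equivFin ⟨i, htu hi⟩, by simp⟩⟩

theorem recombination_thinning_general
    {X : Type*} [NormedAddCommGroup X] [NormedSpace ℝ X]
    (N m : ℕ)
    (f : Fin N → X)
    (σ : Fin m → StrongDual ℝ X)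
    (a : Fin N → ℝ) (ha : ∀ i, 0 < a i)
    (φ : X) (hφ : φ = ∑ i, a i • f i) :
    ∃ (b : Fin (min N (m + 1)) → ℝ) (e : Fin (min N (m + 1)) → Fin N),
      (∀ j, 0 ≤ b j) ∧
      (∑ j, b j) = (∑ i, a i) ∧
      (∀ l : Fin m, σ l (φ - ∑ j, b j • f (e j)) = 0) := by
  let T : X →L[ℝ] (Fin m → ℝ) := ContinuousLinearMap.pi σ
  obtain ⟨t, b, ht, hb, hbt, hsum, hmom⟩ :=
    exists_nonneg_weights_card_support_le_finrank_succ (fun i => T (f i)) fun i => (ha i).le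
  rw [finrank_fin_fun] at ht
  obtain ⟨e, he, hte⟩ := t.exists_injective_fin_range_superset (n := min N (m + 1))
    (le_min (by simpa using card_le_univ t) ht) (by simp)
  have hb_out : ∀ i ∉ Set.range e, b i = 0 := fun i hi => hbt i fun h => hi (hte h)
  have hu : ∑ j, b (e j) • f (e j) = ∑ i, b i • f i :=
    Fintype.sum_of_injective e he _ _ (fun i hi => by rw [hb_out i hi, zero_smul]) fun _ => rfl
  refine ⟨b ∘ e, e, fun j => hb _, ?_, fun l => ?_⟩
  · rw [← hsum]
    exact Fintype.sum_of_injective e he _ _ hb_out fun _ => rfl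
  · have hT : T (φ - ∑ j, b (e j) • f (e j)) = 0 := by
      simp only [hu, hφ, map_sub, map_sum, map_smul, hmom, sub_self]
    exact congrFun hT l

/-- Recombination Thinning (Lemma: existence form). -/
theorem recombination_thinning
    {X : Type*} [NormedAddCommGroup X] [NormedSpace ℝ X] [CompleteSpace X]
    (N m : ℕ) (hN : 1 ≤ N)
    (f : Fin N → X) (hf : ∀ i, f i ≠ 0)
    (σ : Fin m → StrongDual ℝ X)
    (a : Fin N → ℝ) (ha : ∀ i, 0 < a i)
    (φ : X) (hφ : φ = ∑ i, a i • f i) :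
    ∃ (b : Fin (min N (m + 1)) → ℝ) (e : Fin (min N (m + 1)) → Fin N),
      (∀ j, 0 ≤ b j) ∧
      (∑ j, b j) = (∑ i, a i) ∧
      (∀ l : Fin m, σ l (φ - ∑ j, b j • f (e j)) = 0) :=
  recombination_thinning_general N m f σ a ha φ hφ
end

section
/- Let X be a real Banach space with dual X*, let θ > θ_0 > 0, and let φ, u ∈ X with ‖φ‖_X ≤ C and ‖u‖_X ≤ C for some constant C > 0. Let d ≥ 1 and σ_1, …, σ_d ∈ X* be such that |σ_j(φ − u)| ≤ θ_0 for every j ∈ {1, …, d}. Then for every σ ∈ X* one has |σ(φ − u)| ≤ 2C ‖σ‖_{X*}; and moreover, for every t ∈ [0, θ/θ_0], every c ∈ ℝ^d with Σ_{j=1}^d |c_j| ≤ t, and every ρ ∈ X* with ‖ρ − Σ_{j=1}^d c_j σ_j‖_{X*} ≤ (θ − t θ_0)/(2C), one has |σ(φ − u)| ≤ 2C ‖σ − ρ‖_{X*} + θ. Consequently |σ(φ − u)| ≤ min{ 2C ‖σ‖_{X*}, 2C dist_{X*}(σ, Reach({σ_1, …, σ_d}, 2C, θ, θ_0)) + θ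 }. -/
/-!
Write `v = φ - u`, so `‖v‖ ≤ 2C` and every functional satisfies `|σ v| ≤ 2C ‖σ‖`. For a
combination `S = ∑ c_j σ_j` with `∑ |c_j| ≤ t` the matching conditions give `|S v| ≤ t θ₀`,
and the radius `(θ - t θ₀) / 2C` of the ball around `S` containing `ρ` is chosen so that
`|(ρ - S) v| ≤ θ - t θ₀`. Splitting `σ = (σ - ρ) + (ρ - S) + S` gives
`|σ v| ≤ 2C ‖σ - ρ‖ + θ` for every `ρ` in the reach set, and taking the infimum over this
set, which contains `0`, gives the bound through the distance.
-/

open Metric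

/-- The reach set `Reach({σ₁,…,σ_d}, c, θ, θ₀)` of a finite family of functionals. -/
def Reach {X : Type*} [NormedAddCommGroup X] [NormedSpace ℝ X]
    {d : ℕ} (σs : Fin d → StrongDual ℝ X) (c θ θ₀ : ℝ) :
    Set (StrongDual ℝ X) :=
  {σ | ∃ τ : ℝ, 0 ≤ τ ∧ τ ≤ θ / θ₀ ∧
    ∃ β : Fin d → ℝ, (∑ j, |β j|) ≤ τ ∧ ‖σ - ∑ j, β j • σs j‖ ≤ (θ - τ * θ₀) / c}

section

variable {X : Type*} [NormedAddCommGroup X] [NormedSpace ℝ X]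

theorem StrongDual.abs_apply_le_of_norm_le (σ : StrongDual ℝ X) {v : X} {r : ℝ}
    (hv : ‖v‖ ≤ r) : |σ v| ≤ r * ‖σ‖ := by
  rw [← Real.norm_eq_abs, mul_comm]
  exact σ.le_of_opNorm_le_of_le le_rfl hv

theorem StrongDual.abs_sum_smul_apply_le {ι : Type*} [Fintype ι] (σs : ι → StrongDual ℝ X)
    (c : ι → ℝ) {v : X} {θ₀ : ℝ} (hv : ∀ j, |σs j v| ≤ θ₀) :
    |(∑ j, c j • σs j) v| ≤ (∑ j, |c j|) * θ₀ := by
  simp only [sum_apply, smul_apply, smul_eq_mul]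
  calc |∑ j, c j * σs j v| ≤ ∑ j, |c j * σs j v| := Finset.abs_sum_le_sum_abs _ _
    _ = ∑ j, |c j| * |σs j v| := by simp only [abs_mul]
    _ ≤ ∑ j, |c j| * θ₀ := by gcongr with j; exact hv j
    _ = (∑ j, |c j|) * θ₀ := (Finset.sum_mul _ _ _).symm

theorem StrongDual.abs_apply_le_of_norm_sub_sum_smul_le {ι : Type*} [Fintype ι]
    (σs : ι → StrongDual ℝ X) (c : ι → ℝ) (σ ρ : StrongDual ℝ X) {v : X}
    {r θ θ₀ t : ℝ} (hr : 0 < r) (hθ₀ : 0 ≤ θ₀) (hv : ‖v‖ ≤ r) (hσs : ∀ j, |σs j v| ≤ θ₀)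
    (hc : ∑ j, |c j| ≤ t) (hρ : ‖ρ - ∑ j, c j • σs j‖ ≤ (θ - t * θ₀) / r) :
    |σ v| ≤ r * ‖σ - ρ‖ + θ := by
  set S := ∑ j, c j • σs j
  have hS : |S v| ≤ t * θ₀ :=
    (abs_sum_smul_apply_le σs c hσs).trans (mul_le_mul_of_nonneg_right hc hθ₀)
  have hρS : |(ρ - S) v| ≤ θ - t * θ₀ :=
    calc |(ρ - S) v| ≤ r * ‖ρ - S‖ := abs_apply_le_of_norm_le _ hv
      _ ≤ r * ((θ - t * θ₀) / r) := by gcongr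
      _ = θ - t * θ₀ := mul_div_cancel₀ _ hr.ne'
  have hσρ : |(σ - ρ) v| ≤ r * ‖σ - ρ‖ := abs_apply_le_of_norm_le _ hv
  have hsplit : σ v = (σ - ρ) v + (ρ - S) v + S v := by simp
  calc |σ v| ≤ |(σ - ρ) v| + |(ρ - S) v| + |S v| := by
        rw [hsplit]; exact abs_add_three _ _ _
    _ ≤ r * ‖σ - ρ‖ + (θ - t * θ₀) + t * θ₀ := by gcongr
    _ = r * ‖σ - ρ‖ + θ := by ring

theorem zero_mem_reach {d : ℕ} (σs : Fin d → StrongDual ℝ X) {c θ θ₀ : ℝ}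
    (hc : 0 ≤ c) (hθ : 0 ≤ θ) (hθ₀ : 0 ≤ θ₀) : 0 ∈ Reach σs c θ θ₀ :=
  ⟨0, le_rfl, div_nonneg hθ hθ₀, 0, by simp, by simpa using div_nonneg hθ hc⟩

end

theorem Metric.le_mul_infDist_add {α : Type*} [PseudoMetricSpace α] {s : Set α} {x : α}
    {a b r : ℝ} (hs : s.Nonempty) (hr : 0 < r) (h : ∀ y ∈ s, a ≤ r * dist x y + b) :
    a ≤ r * infDist x s + b := by
  have : (a - b) / r ≤ infDist x s :=
    (le_infDist hs).2 fun y hy => by rw [div_le_iff₀' hr]; linarith [h y hy]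
  rw [div_le_iff₀' hr] at this
  linarith

theorem estimate_via_reach_general
    {X : Type*} [NormedAddCommGroup X] [NormedSpace ℝ X]
    (θ θ₀ C : ℝ) (hθ₀ : 0 < θ₀) (hθ : θ₀ < θ) (hC : 0 < C)
    (φ u : X) (hφ : ‖φ‖ ≤ C) (hu : ‖u‖ ≤ C)
    (d : ℕ) (σs : Fin d → StrongDual ℝ X)
    (hmatch : ∀ j, |σs j (φ - u)| ≤ θ₀)
    (σ : StrongDual ℝ X) :
    |σ (φ - u)| ≤ 2 * C * ‖σ‖ ∧
    (∀ t : ℝ, 0 ≤ t → t ≤ θ / θ₀ →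
      ∀ c : Fin d → ℝ, (∑ j, |c j|) ≤ t →
        ∀ ρ : StrongDual ℝ X, ‖ρ - ∑ j, c j • σs j‖ ≤ (θ - t * θ₀) / (2 * C) →
          |σ (φ - u)| ≤ 2 * C * ‖σ - ρ‖ + θ) ∧
    |σ (φ - u)| ≤ min (2 * C * ‖σ‖) (2 * C * infDist σ (Reach σs (2 * C) θ θ₀) + θ) := by
  have hv : ‖φ - u‖ ≤ 2 * C := (norm_sub_le φ u).trans (by linarith)
  have h2C : (0 : ℝ) < 2 * C := by positivity
  have hnorm := σ.abs_apply_le_of_norm_le hv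
  have hball : ∀ t : ℝ, 0 ≤ t → t ≤ θ / θ₀ → ∀ c : Fin d → ℝ, (∑ j, |c j|) ≤ t →
      ∀ ρ : StrongDual ℝ X, ‖ρ - ∑ j, c j • σs j‖ ≤ (θ - t * θ₀) / (2 * C) →
        |σ (φ - u)| ≤ 2 * C * ‖σ - ρ‖ + θ := fun _ _ _ c hc ρ hρ =>
    StrongDual.abs_apply_le_of_norm_sub_sum_smul_le σs c σ ρ h2C hθ₀.le hv hmatch hc hρ
  have hreach : (Reach σs (2 * C) θ θ₀).Nonempty :=
    ⟨0, zero_mem_reach σs h2C.le (by linarith) hθ₀.le⟩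
  refine ⟨hnorm, hball, le_min hnorm (le_mul_infDist_add hreach h2C ?_)⟩
  rintro ρ ⟨τ, hτ₀, hτ, β, hβ, hρ⟩
  rw [dist_eq_norm]
  exact hball τ hτ₀ hτ β hβ ρ hρ

/-- Estimates for `|σ(φ - u)|` in terms of the distance to the reach set. -/
theorem estimate_via_reach
    {X : Type*} [NormedAddCommGroup X] [NormedSpace ℝ X] [CompleteSpace X]
    (θ θ₀ C : ℝ) (hθ₀ : 0 < θ₀) (hθ : θ₀ < θ) (hC : 0 < C)
    (φ u : X) (hφ : ‖φ‖ ≤ C) (hu : ‖u‖ ≤ C)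
    (d : ℕ) (hd : 1 ≤ d) (σs : Fin d → StrongDual ℝ X)
    (hmatch : ∀ j, |σs j (φ - u)| ≤ θ₀)
    (σ : StrongDual ℝ X) :
    |σ (φ - u)| ≤ 2 * C * ‖σ‖ ∧
    (∀ t : ℝ, 0 ≤ t → t ≤ θ / θ₀ →
      ∀ c : Fin d → ℝ, (∑ j, |c j|) ≤ t →
        ∀ ρ : StrongDual ℝ X, ‖ρ - ∑ j, c j • σs j‖ ≤ (θ - t * θ₀) / (2 * C) →
          |σ (φ - u)| ≤ 2 * C * ‖σ - ρ‖ + θ) ∧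
    |σ (φ - u)| ≤ min (2 * C * ‖σ‖) (2 * C * infDist σ (Reach σs (2 * C) θ θ₀) + θ) :=
  estimate_via_reach_general θ θ₀ C hθ₀ hθ hC φ u hφ hu d σs hmatch σ
end

section
/- Let X be a real Banach space with dual X*, let ε > ε_0 > 0, let N ≥ 1 and Λ ≥ 1 be integers, let f_1, …, f_N ∈ X be nonzero, and let Σ ⊂ X* be finite with cardinality Λ. Let a_1, …, a_N ∈ ℝ \ {0}, set φ := Σ_{i=1}^N a_i f_i and C := Σ_{i=1}^N |a_i| ‖f_i‖_X > 0. Let K ≥ 1 be an integer with K ≤ min{N − 1, Λ}, and suppose that for every sequence σ_1, …, σ_{K+1} of elements of Σ there exists j ∈ {1, …, K} with σ_{j+1} ∈ Reach({σ_1, …, σ_j}, 2C, ε, ε_0). Then there exist an integer n ∈ {1, …, K}, coefficients c_1, …, c_{n+1} ∈ ℝ, and indices e(1), …, e(n+1) ∈ {1, …, N} such that Σ_{s=1}^{n+1} |c_s| ‖f_{e(s)}‖_X = C and the element u := Σ_{s=1}^{n+1} c_s f_{e(s)} satisfies |σ(φ − u)| ≤ ε for every σ ∈ Σ. Moreover,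 if a_1, …, a_N > 0 then c_1, …, c_{n+1} ≥ 0. -/
/-!
Greedily pick functionals of `S`, each outside the reach of the previous ones; by hypothesis this
stops after at most `K` steps, with a family `σ₁, …, σₘ` whose reach covers `S`.
Writing `φ = ∑ wᵢ gᵢ` with `wᵢ = |aᵢ| ‖fᵢ‖` and unit vectors `gᵢ = (aᵢ / wᵢ) fᵢ`, the point
`(σₖ φ / C)ₖ ∈ ℝᵐ` is a convex combination of the points `(σₖ gᵢ)ₖ`, hence by Carathéodory of at most
`m + 1 ≤ K + 1` of them. This yields `u` of the same weighted `ℓ¹`-mass `C` with `σₖ u = σₖ φ` for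
all `k`. For `σ ∈ S` with reach data `τ, β`, the combination `∑ βₖ σₖ` kills `φ - u`, so
`|σ (φ - u)| = |(σ - ∑ βₖ σₖ) (φ - u)| ≤ (ε - τ ε₀) / (2C) · ‖φ - u‖ ≤ ε - τ ε₀ ≤ ε`.
-/

open Finset Module

section ReachChain

variable {X : Type*} [NormedAddCommGroup X] [NormedSpace ℝ X]

/-- The sequences counted by `N(Σ, c, θ, θ₀)`: no term lies in the reach of its predecessors. -/
def IsReachChain {m : ℕ} (σs : Fin m → StrongDual ℝ X) (c θ θ₀ : ℝ) : Prop :=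
  ∀ j (hj : j < m), 1 ≤ j → σs ⟨j, hj⟩ ∉ Reach (Fin.take j hj.le σs) c θ θ₀

variable {c θ θ₀ : ℝ}

lemma IsReachChain.snoc {m : ℕ} {σs : Fin m → StrongDual ℝ X} (h : IsReachChain σs c θ θ₀)
    {σ : StrongDual ℝ X} (hσ : σ ∉ Reach σs c θ θ₀) :
    IsReachChain (Fin.snoc σs σ : Fin (m + 1) → StrongDual ℝ X) c θ θ₀ := by
  intro j hj hj1
  rcases (Nat.lt_succ_iff.mp hj).lt_or_eq with hjm | rfl
  · have htake : Fin.take j hj.le (Fin.snoc σs σ : Fin (m + 1) → StrongDual ℝ X) =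
        Fin.take j hjm.le σs := by
      funext i
      exact Fin.snoc_castSucc (α := fun _ => StrongDual ℝ X) (i := Fin.castLE hjm.le i) ..
    rw [htake]
    simpa [Fin.snoc, hjm] using h j hjm hj1
  · simpa [Fin.snoc] using hσ

lemma exists_reach_cover_of_not_isReachChain (S : Set (StrongDual ℝ X)) (K : ℕ)
    (hS : ∀ σs : Fin (K + 1) → StrongDual ℝ X, (∀ i, σs i ∈ S) → ¬ IsReachChain σs c θ θ₀) :
    ∃ m ≤ K, ∃ σs : Fin m → StrongDual ℝ X, ∀ σ ∈ S, σ ∈ Reach σs c θ θ₀ := by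
  by_contra! hcover
  -- otherwise every chain in `S` of length at most `K` extends to a longer one
  have hchain : ∀ m ≤ K + 1, ∃ σs : Fin m → StrongDual ℝ X,
      (∀ i, σs i ∈ S) ∧ IsReachChain σs c θ θ₀ := by
    intro m hm
    induction m with
    | zero => exact ⟨Fin.elim0, fun i => i.elim0, fun j hj => absurd hj (Nat.not_lt_zero j)⟩
    | succ m ih =>
      obtain ⟨σs, hσsS, hσs⟩ := ih (by omega)
      obtain ⟨σ, hσS, hσ⟩ := hcover m (by omega) σs
      exact ⟨Fin.snoc σs σ, Fin.forall_fin_succ'.mpr ⟨by simpa using hσsS, by simpa using hσS⟩,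
        hσs.snoc hσ⟩
  obtain ⟨σs, hσsS, hσs⟩ := hchain (K + 1) le_rfl
  exact hS σs hσsS hσs

lemma abs_apply_le_of_mem_reach {m : ℕ} {σs : Fin m → StrongDual ℝ X} (hc : 0 < c)
    (hθ₀ : 0 ≤ θ₀) {σ : StrongDual ℝ X} (hσ : σ ∈ Reach σs c θ θ₀) {x : X}
    (hx : ∀ k, σs k x = 0) (hxc : ‖x‖ ≤ c) : |σ x| ≤ θ := by
  obtain ⟨τ, hτ, -, β, -, hβ⟩ := hσ
  have hσx : σ x = (σ - ∑ k, β k • σs k) x := by simp [hx]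
  calc |σ x| = ‖(σ - ∑ k, β k • σs k) x‖ := by rw [hσx, Real.norm_eq_abs]
    _ ≤ ‖σ - ∑ k, β k • σs k‖ * ‖x‖ := ContinuousLinearMap.le_opNorm _ _
    _ ≤ (θ - τ * θ₀) / c * c := by gcongr; exact (norm_nonneg _).trans hβ
    _ = θ - τ * θ₀ := div_mul_cancel₀ _ hc.ne'
    _ ≤ θ := sub_le_self θ (mul_nonneg hτ hθ₀)

end ReachChain

lemma exists_fin_sum_smul_eq_of_mem_convexHull {E ι : Type*} [AddCommGroup E] [Module ℝ E]
    [FiniteDimensional ℝ E] {n : ℕ} (hn : finrank ℝ E ≤ n) {p : ι → E} {x : E}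
    (hx : x ∈ convexHull ℝ (Set.range p)) :
    ∃ (μ : Fin (n + 1) → ℝ) (e : Fin (n + 1) → ι),
      (∀ s, 0 ≤ μ s) ∧ ∑ s, μ s = 1 ∧ ∑ s, μ s • p (e s) = x := by
  obtain ⟨κ, _, z, μ, hz, hzind, hμ, hμsum, hμx⟩ := eq_pos_convex_span_of_mem_convexHull hx
  have hcard : Fintype.card κ ≤ n + 1 :=
    hzind.card_le_finrank_succ.trans (by grw [Submodule.finrank_le, hn])
  obtain ⟨emb⟩ : Nonempty (κ ↪ Fin (n + 1)) :=
    Function.Embedding.nonempty_of_card_le (by simpa using hcard)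
  choose e he using fun k => hz (Set.mem_range_self k)
  obtain ⟨-, i₀, -⟩ := convexHull_nonempty_iff.mp ⟨x, hx⟩
  classical
  set μ' := Function.extend emb μ 0
  set e' := Function.extend emb e fun _ => i₀
  have hμ'out : ∀ s ∉ Set.range emb, μ' s = 0 := fun s hs => Function.extend_apply' _ _ _ hs
  refine ⟨μ', e', fun s => ?_, ?_, ?_⟩
  · by_cases hs : s ∈ Set.range emb
    · obtain ⟨k, rfl⟩ := hs
      simpa only [μ', emb.injective.extend_apply] using (hμ k).le
    · exact (hμ'out s hs).ge
  · rw [← hμsum]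
    exact (Fintype.sum_of_injective emb emb.injective _ _ hμ'out
      fun k => (emb.injective.extend_apply μ 0 k).symm).symm
  · rw [← hμx]
    refine (Fintype.sum_of_injective emb emb.injective _ _
      (fun s hs => by rw [hμ'out s hs, zero_smul]) fun k => ?_).symm
    simp only [μ', e', emb.injective.extend_apply, he]

lemma norm_sum_smul_le {ι X : Type*} [Fintype ι] [SeminormedAddCommGroup X] [NormedSpace ℝ X]
    (a : ι → ℝ) (f : ι → X) : ‖∑ i, a i • f i‖ ≤ ∑ i, |a i| * ‖f i‖ :=
  (norm_sum_le _ _).trans_eq (by simp only [norm_smul, Real.norm_eq_abs])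

lemma exists_sparse_combination_map_eq {ι X E : Type*} [Fintype ι] [Nonempty ι]
    [NormedAddCommGroup X] [NormedSpace ℝ X] [AddCommGroup E] [Module ℝ E]
    [FiniteDimensional ℝ E] (L : X →ₗ[ℝ] E) {n : ℕ} (hn : finrank ℝ E ≤ n) {a : ι → ℝ}
    {f : ι → X} (ha : ∀ i, a i ≠ 0) (hf : ∀ i, f i ≠ 0) :
    ∃ (c : Fin (n + 1) → ℝ) (e : Fin (n + 1) → ι),
      ∑ s, |c s| * ‖f (e s)‖ = ∑ i, |a i| * ‖f i‖ ∧
      L (∑ s, c s • f (e s)) = L (∑ i, a i • f i) ∧ ∀ s, 0 ≤ c s * a (e s) := by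
  set w : ι → ℝ := fun i => |a i| * ‖f i‖
  have hw (i : ι) : 0 < w i := mul_pos (abs_pos.mpr (ha i)) (norm_pos_iff.mpr (hf i))
  set W := ∑ i, w i
  have hW : 0 < W := sum_pos (fun i _ => hw i) univ_nonempty
  -- `a i • f i = w i • g i` with `‖g i‖ = 1`, so `L (∑ a i • f i) / W` is a convex combination
  -- of the `L (g i)`
  set g : ι → X := fun i => (a i / w i) • f i
  have hwg (i : ι) : w i • g i = a i • f i := by
    simp only [g, smul_smul, mul_div_cancel₀ _ (hw i).ne']
  have hx : univ.centerMass w (L ∘ g) ∈ convexHull ℝ (Set.range (L ∘ g)) :=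
    univ.centerMass_mem_convexHull (fun i _ => (hw i).le) hW fun i _ => Set.mem_range_self i
  obtain ⟨μ, e, hμ, hμsum, hμx⟩ := exists_fin_sum_smul_eq_of_mem_convexHull hn hx
  refine ⟨fun s => W * μ s * (a (e s) / w (e s)), e, ?_, ?_, fun s => ?_⟩
  · have hmass (s : Fin (n + 1)) : |W * μ s * (a (e s) / w (e s))| * ‖f (e s)‖ = W * μ s := by
      have := hw (e s)
      rw [abs_mul, abs_div, abs_of_nonneg (mul_nonneg hW.le (hμ s)), abs_of_pos this]
      field_simp
      simp only [w, mul_assoc]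
    simp only [hmass, ← mul_sum, hμsum, mul_one, W]
  · calc L (∑ s, (W * μ s * (a (e s) / w (e s))) • f (e s))
        = W • ∑ s, μ s • (L ∘ g) (e s) := by
          simp only [map_sum, map_smul, smul_sum, smul_smul, Function.comp_apply, g, mul_assoc]
      _ = ∑ i, w i • L (g i) := by
          rw [hμx, centerMass, smul_inv_smul₀ hW.ne']; rfl
      _ = L (∑ i, a i • f i) := by simp only [← hwg, map_sum, map_smul]
  · have := hw (e s)
    have := hμ s
    calc 0 ≤ W * μ s / w (e s) * a (e s) ^ 2 := by positivity
      _ = _ := by ring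

theorem banach_GRIM_convergence_general
    {X : Type*} [NormedAddCommGroup X] [NormedSpace ℝ X]
    (ε ε₀ : ℝ) (hε₀ : 0 < ε₀)
    (N : ℕ) (hN : 1 ≤ N)
    (f : Fin N → X) (hf : ∀ i, f i ≠ 0)
    (S : Finset (StrongDual ℝ X))
    (a : Fin N → ℝ) (ha : ∀ i, a i ≠ 0)
    (φ : X) (hφ : φ = ∑ i, a i • f i)
    (C : ℝ) (hC : C = ∑ i, |a i| * ‖f i‖)
    (K : ℕ) (hK1 : 1 ≤ K)
    (hreach : ∀ σs : Fin (K + 1) → StrongDual ℝ X, (∀ i, σs i ∈ S) →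
      ∃ j : ℕ, ∃ h1 : 1 ≤ j, ∃ h2 : j ≤ K,
        σs ⟨j, Nat.lt_succ_of_le h2⟩ ∈
          Reach (fun i : Fin j => σs ⟨i.1, i.2.trans (Nat.lt_succ_of_le h2)⟩)
            (2 * C) ε ε₀) :
    ∃ n : ℕ, 1 ≤ n ∧ n ≤ K ∧
      ∃ (c : Fin (n + 1) → ℝ) (e : Fin (n + 1) → Fin N),
        (∑ s, |c s| * ‖f (e s)‖) = C ∧
        (∀ σ ∈ S, |σ (φ - ∑ s, c s • f (e s))| ≤ ε) ∧
        ((∀ i, 0 < a i) → ∀ s, 0 ≤ c s) := by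
  have : Nonempty (Fin N) := ⟨⟨0, hN⟩⟩
  obtain ⟨m, hmK, σs, hcover⟩ := exists_reach_cover_of_not_isReachChain (c := 2 * C) (θ := ε)
      (θ₀ := ε₀) (S : Set (StrongDual ℝ X)) K fun σs hσs hchain => by
    obtain ⟨j, hj1, _, hj⟩ := hreach σs hσs
    -- `Fin.take j _ σs` unfolds to the prefix written in `hreach`
    exact hchain j _ hj1 hj
  obtain ⟨c, e, hmass, hL, hsign⟩ := exists_sparse_combination_map_eq
    (ContinuousLinearMap.pi σs).toLinearMap (n := K) (by simpa using hmK) ha hf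
  have hC₀ : 0 < C := hC ▸ sum_pos (fun i _ => by have := ha i; have := hf i; positivity)
    univ_nonempty
  refine ⟨K, hK1, le_rfl, c, e, hC ▸ hmass, fun σ hσ => ?_,
    fun hpos s => nonneg_of_mul_nonneg_left (hsign s) (hpos _)⟩
  refine abs_apply_le_of_mem_reach (by positivity) hε₀.le (hcover σ hσ) (fun k => ?_) ?_
  · simpa [hφ, sub_eq_zero] using (congrFun hL k).symm
  · calc ‖φ - ∑ s, c s • f (e s)‖ ≤ ‖φ‖ + ‖∑ s, c s • f (e s)‖ := norm_sub_le _ _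
      _ ≤ C + C := by
        gcongr
        · exact hφ ▸ hC ▸ norm_sum_smul_le a f
        · exact (norm_sum_smul_le c (f ∘ e)).trans_eq (hmass.trans hC.symm)
      _ = 2 * C := by ring

/-- Banach GRIM convergence: existence of a sparse approximation. -/
theorem banach_GRIM_convergence
    {X : Type*} [NormedAddCommGroup X] [NormedSpace ℝ X] [CompleteSpace X]
    (ε ε₀ : ℝ) (hε₀ : 0 < ε₀) (hε : ε₀ < ε)
    (N Λ : ℕ) (hN : 1 ≤ N) (hΛ : 1 ≤ Λ)
    (f : Fin N → X) (hf : ∀ i, f i ≠ 0)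
    (S : Finset (StrongDual ℝ X)) (hS : S.card = Λ)
    (a : Fin N → ℝ) (ha : ∀ i, a i ≠ 0)
    (φ : X) (hφ : φ = ∑ i, a i • f i)
    (C : ℝ) (hC : C = ∑ i, |a i| * ‖f i‖)
    (K : ℕ) (hK1 : 1 ≤ K) (hKN : K ≤ N - 1) (hKΛ : K ≤ Λ)
    (hreach : ∀ σs : Fin (K + 1) → StrongDual ℝ X, (∀ i, σs i ∈ S) →
      ∃ j : ℕ, ∃ h1 : 1 ≤ j, ∃ h2 : j ≤ K,
        σs ⟨j, Nat.lt_succ_of_le h2⟩ ∈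
          Reach (fun i : Fin j => σs ⟨i.1, i.2.trans (Nat.lt_succ_of_le h2)⟩)
            (2 * C) ε ε₀) :
    ∃ n : ℕ, 1 ≤ n ∧ n ≤ K ∧
      ∃ (c : Fin (n + 1) → ℝ) (e : Fin (n + 1) → Fin N),
        (∑ s, |c s| * ‖f (e s)‖) = C ∧
        (∀ σ ∈ S, |σ (φ - ∑ s, c s • f (e s))| ≤ ε) ∧
        ((∀ i, 0 < a i) → ∀ s, 0 ≤ c s) :=
  banach_GRIM_convergence_general ε ε₀ hε₀ N hN f hf S a ha φ hφ C hC K hK1 hreach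
end

section
/- Let X be a real Banach space with dual X*, let n ≥ 1 be an integer, and let q_1, …, q_n ∈ X and σ_1, …, σ_n ∈ X* satisfy σ_i(q_i) = 1 for every i ∈ {1, …, n} and σ_j(q_i) = 0 whenever 1 ≤ j < i ≤ n. Define operators J_0, J_1, …, J_n : X → X recursively by J_0[w] := 0 and J_t[w] := J_{t−1}[w] + σ_t(w − J_{t−1}[w]) q_t for t ∈ {1, …, n}. Then for every w ∈ X and every j ∈ {1, …, n}, one has σ_j(w − J_n[w]) = 0. -/
/-! Step `t` kills the residual `w - J t w` on `σ t`, since `σ t (q t) = 1`, and changes it only by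
a multiple of `q t`, which every earlier `σ j` annihilates; so the residual vanishes on all
functionals selected so far. -/

section Residual

variable {R M : Type*} [Ring R] [AddCommGroup M] [Module R M]

theorem LinearMap.apply_sub_smul_self_eq_zero {σ : M →ₗ[R] R} {q : M} (h : σ q = 1) (r : M) :
    σ (r - σ r • q) = 0 := by
  rw [map_sub, map_smul, h, smul_eq_mul, mul_one, sub_self]

theorem LinearMap.apply_sub_smul_of_apply_eq_zero {σ : M →ₗ[R] R} {q : M} (h : σ q = 0)
    (c : R) (r : M) : σ (r - c • q) = σ r := by
  rw [map_sub, map_smul, h, smul_zero, sub_zero]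

theorem greedy_residual_apply_eq_zero {n : ℕ} {q : Fin n → M} {σ : Fin n → M →ₗ[R] R}
    (hdiag : ∀ i, σ i (q i) = 1) (htri : ∀ i j : Fin n, j < i → σ j (q i) = 0)
    {w : M} {v : ℕ → M} (hv : ∀ t : Fin n, v (t.1 + 1) = v t.1 + σ t (w - v t.1) • q t) :
    ∀ t ≤ n, ∀ j : Fin n, j.1 < t → σ j (w - v t) = 0 := by
  intro t
  induction t with
  | zero => intro _ j hj; omega
  | succ t ih =>
    intro ht j hj
    let s : Fin n := ⟨t, ht⟩
    rw [hv s, sub_add_eq_sub_sub]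
    rcases Nat.lt_succ_iff_lt_or_eq.mp hj with hjt | rfl
    · rw [LinearMap.apply_sub_smul_of_apply_eq_zero (htri s j hjt)]
      exact ih (by omega) j hjt
    · exact LinearMap.apply_sub_smul_self_eq_zero (hdiag j) _

end Residual

theorem GEIM_interpolation_general
    {X : Type*} [NormedAddCommGroup X] [NormedSpace ℝ X]
    (n : ℕ)
    (q : Fin n → X) (σ : Fin n → StrongDual ℝ X)
    (hdiag : ∀ i, σ i (q i) = 1)
    (htri : ∀ i j : Fin n, j < i → σ j (q i) = 0)
    (J : ℕ → X → X)
    (hJrec : ∀ t : Fin n, ∀ w, J (t.1 + 1) w = J t.1 w + (σ t (w - J t.1 w)) • q t) :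
    ∀ w : X, ∀ j : Fin n, σ j (w - J n w) = 0 := fun w j =>
  greedy_residual_apply_eq_zero (σ := fun i => (σ i : X →ₗ[ℝ] ℝ)) (v := (J · w)) hdiag htri
    (fun t => hJrec t w) n le_rfl j j.2

/-- The GEIM interpolation operators interpolate exactly on the selected functionals. -/
theorem GEIM_interpolation
    {X : Type*} [NormedAddCommGroup X] [NormedSpace ℝ X] [CompleteSpace X]
    (n : ℕ) (hn : 1 ≤ n)
    (q : Fin n → X) (σ : Fin n → StrongDual ℝ X)
    (hdiag : ∀ i, σ i (q i) = 1)
    (htri : ∀ i j : Fin n, j < i → σ j (q i) = 0)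
    (J : ℕ → X → X)
    (hJ0 : ∀ w, J 0 w = 0)
    (hJrec : ∀ t : Fin n, ∀ w, J (t.1 + 1) w = J t.1 w + (σ t (w - J t.1 w)) • q t) :
    ∀ w : X, ∀ j : Fin n, σ j (w - J n w) = 0 :=
  GEIM_interpolation_general n q σ hdiag htri J hJrec
end

section
/- Let Ω be a finite set with N ≥ 1 elements, let a : Ω → ℝ satisfy a(x) > 0 for every x ∈ Ω, let m ≥ 0 be an integer, and let g_1, …, g_m : Ω → ℝ be functions. Set M := min(N, m+1). Then there exists w : Ω → ℝ with w(x) ≥ 0 for every x ∈ Ω, whose support {x ∈ Ω : w(x) ≠ 0} has at most M elements, such that Σ_{x ∈ Ω} w(x) = Σ_{x ∈ Ω} a(x) and Σ_{x ∈ Ω} w(x) g_l(x) = Σ_{x ∈ Ω} a(x) g_l(x) for every l ∈ {1, …, m}. In particular, if Σ_{x ∈ Ω} a(x) = 1 then w defines a probability measure on Ω supported on at most M points whose integrals against g_1, …, g_m agree with those of a. -/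
/-- Recombination thinning for empirical measures: the support can be reduced to at most
`min N (m+1)` points while preserving the total mass and `m` prescribed moments,
keeping all weights nonnegative. -/
theorem recombination_empirical_measure
    {Ω : Type*} [Fintype Ω]
    (N : ℕ) (hN : 1 ≤ N) (hcard : Fintype.card Ω = N)
    (a : Ω → ℝ) (ha : ∀ x, 0 < a x)
    (m : ℕ) (g : Fin m → Ω → ℝ) :
    ∃ w : Ω → ℝ,
      (∀ x, 0 ≤ w x) ∧
      {x : Ω | w x ≠ 0}.ncard ≤ min N (m + 1) ∧
      (∑ x, w x) = (∑ x, a x) ∧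
      (∀ l : Fin m, (∑ x, w x * g l x) = ∑ x, a x * g l x) := by
  classical
  have hΩ : Nonempty Ω := by
    rw [← Fintype.card_pos_iff, hcard]; omega
  set E := Fin m → ℝ
  set φ : Ω → E := fun x l => g l x with hφ
  set S : ℝ := ∑ x, a x with hS
  have hSpos : 0 < S := Finset.sum_pos (fun x _ => ha x) Finset.univ_nonempty
  -- the center of mass lies in the convex hull of the range of φ
  have hp : Finset.univ.centerMass a φ ∈ convexHull ℝ (Set.range φ) :=
    Finset.centerMass_mem_convexHull _ (fun x _ => (ha x).le) hSpos
      (fun x _ => Set.mem_range_self x)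
  set p : E := Finset.univ.centerMass a φ with hpdef
  obtain ⟨ι, hι, z, v, hrange, hindep, hvpos, hvsum, hzsum⟩ :=
    eq_pos_convex_span_of_mem_convexHull hp
  -- choose preimages
  have hpre : ∀ i : ι, ∃ x : Ω, φ x = z i := fun i => hrange (Set.mem_range_self i)
  choose pre hpre' using hpre
  have hpreinj : Function.Injective pre := by
    intro i j hij
    apply hindep.injective
    rw [← hpre' i, ← hpre' j, hij]
  -- cardinality bound on ι
  have hcardι : Fintype.card ι ≤ m + 1 := by
    rcases isEmpty_or_nonempty ι with h | h
    · simp [Fintype.card_eq_zero]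
    · rw [← hindep.finrank_vectorSpan_add_one]
      have h2 := Submodule.finrank_le (vectorSpan ℝ (Set.range z))
      have h3 : Module.finrank ℝ E = m := by simp [E]
      exact Nat.add_le_add_right (le_of_le_of_eq h2 h3) 1
  -- define the new weights
  refine ⟨fun x => S * ∑ i, if pre i = x then v i else 0, ?_, ?_, ?_, ?_⟩
  · intro x
    refine mul_nonneg hSpos.le (Finset.sum_nonneg fun i _ => ?_)
    split <;> simp [(hvpos _).le]
  · refine le_min ?_ ?_
    · calc {x : Ω | (fun x => S * ∑ i, if pre i = x then v i else 0) x ≠ 0}.ncard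
          ≤ (Set.univ : Set Ω).ncard := Set.ncard_le_ncard (Set.subset_univ _)
            (Set.finite_univ)
        _ = N := by rw [Set.ncard_univ, Nat.card_eq_fintype_card, hcard]
    · calc {x : Ω | (fun x => S * ∑ i, if pre i = x then v i else 0) x ≠ 0}.ncard
          ≤ (Set.range pre).ncard := by
            apply Set.ncard_le_ncard _ (Set.finite_range pre)
            intro x hx
            simp only [Set.mem_setOf_eq] at hx
            by_contra hxr
            apply hx
            rw [Finset.sum_eq_zero, mul_zero]
            intro i _
            rw [if_neg]
            intro h; exact hxr ⟨i, h⟩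
        _ = Fintype.card ι := by
            rw [← Nat.card_coe_set_eq, Nat.card_range_of_injective hpreinj,
              Nat.card_eq_fintype_card]
        _ ≤ m + 1 := hcardι
  · -- total mass
    rw [← Finset.mul_sum, Finset.sum_comm]
    simp only [Finset.sum_ite_eq, Finset.mem_univ, if_true]
    rw [hvsum, mul_one, hS]
  · -- moments
    intro l
    have key : ∑ x, (S * ∑ i, if pre i = x then v i else 0) * g l x
        = S * ∑ i, v i * g l (pre i) := by
      simp_rw [mul_assoc, ← Finset.mul_sum]
      congr 1
      simp_rw [Finset.sum_mul, ite_mul, zero_mul]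
      rw [Finset.sum_comm]
      simp [Finset.sum_ite_eq]
    rw [key]
    have h2 : ∑ i, v i * g l (pre i) = p l := by
      rw [← hzsum, Finset.sum_apply]
      refine Finset.sum_congr rfl fun i _ => ?_
      rw [Pi.smul_apply, smul_eq_mul, ← hpre' i]
    rw [h2]
    have hpl : S * p l = ∑ x, a x * g l x := by
      rw [hpdef, Finset.centerMass, ← hS]
      rw [Pi.smul_apply, Finset.sum_apply, smul_eq_mul, ← mul_assoc,
        mul_inv_cancel₀ hSpos.ne', one_mul]
      refine Finset.sum_congr rfl fun x _ => ?_
      rw [Pi.smul_apply, smul_eq_mul]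
    exact hpl
end
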